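/- Let H₁ and H₂ be finite-dimensional complex Hilbert spaces, let {Pᵢ} be a finite family of mutually orthogonal projections on H₁ with Σᵢ Pᵢ = 1, and let {Qⱼ} be a finite family of mutually orthogonal projections on H₂ with Σⱼ Qⱼ = 1. For a density operator σ on H₁ ⊗ H₂ set p_{ij} := Tr((Pᵢ ⊗ Qⱼ) σ (Pᵢ ⊗ Qⱼ)) and, whenever p_{ij} > 0, σ_{ij} := (Pᵢ ⊗ Qⱼ) σ (Pᵢ ⊗ Qⱼ)/p_{ij}. Then Σ_{(i,j) : p_{ij} > 0} p_{ij} (‖σ_{ij}‖_γ − 1) ≤ ‖σ‖_γ − 1. -/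

import Mathlib

open Matrix
open scoped Kronecker ComplexOrder

noncomputable def traceNorm {n : Type*} [Fintype n] [DecidableEq n] (A : Matrix n n ℂ) : ℝ :=
  ((Matrix.posSemidef_conjTranspose_mul_self A).1.eigenvectorUnitary.1 *
    diagonal (((↑) : ℝ → ℂ) ∘ (Real.sqrt ∘ (Matrix.posSemidef_conjTranspose_mul_self A).1.eigenvalues)) *
    (star (Matrix.posSemidef_conjTranspose_mul_self A).1.eigenvectorUnitary : Matrix n n ℂ)).trace.re

noncomputable def gammaNorm {m n : Type*} [Fintype m] [DecidableEq m] [Fintype n] [DecidableEq n]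
    (t : Matrix (m × n) (m × n) ℂ) : ℝ :=
  sInf { c : ℝ | ∃ (r : ℕ) (u : Fin r → Matrix m m ℂ) (v : Fin r → Matrix n n ℂ),
    t = ∑ i, (u i) ⊗ₖ (v i) ∧ c = ∑ i, traceNorm (u i) * traceNorm (v i) }

def IsDensity {n : Type*} [Fintype n] (ρ : Matrix n n ℂ) : Prop :=
  ρ.PosSemidef ∧ ρ.trace = 1

def evec {ι : Type*} (ψ : EuclideanSpace ℂ ι) : ι → ℂ := ψ

noncomputable def tensorVec {ι κ : Type*} (a : EuclideanSpace ℂ ι) (b : EuclideanSpace ℂ κ) :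
    EuclideanSpace ℂ (ι × κ) :=
  (WithLp.equiv 2 _).symm (fun p => evec a p.1 * evec b p.2)

noncomputable def projOnto {ι : Type*} (ψ : EuclideanSpace ℂ ι) : Matrix ι ι ℂ :=
  Matrix.vecMulVec (evec ψ) (star (evec ψ))

/-!
Write `Bᵢⱼ = Pᵢ ⊗ Qⱼ`, so that `p_{ij} σ_{ij} = Bᵢⱼ σ Bᵢⱼ` and `Σ p_{ij} = Tr σ = 1`; the claim
then reduces to `Σ_{ij} ‖Bᵢⱼ σ Bᵢⱼ‖_γ ≤ ‖σ‖_γ`. Compressing a decomposition `σ = Σₖ uₖ ⊗ vₖ`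
gives the decompositions `Bᵢⱼ σ Bᵢⱼ = Σₖ Pᵢ uₖ Pᵢ ⊗ Qⱼ vₖ Qⱼ`, so it suffices to prove the
pinching inequality `Σᵢ ‖Pᵢ u Pᵢ‖₁ ≤ ‖u‖₁`. That follows from the duality
`‖A‖₁ = max {Re Tr (X A) : X* X ≤ 1}`: if `Xᵢ` attains the maximum for `Pᵢ u Pᵢ`, then
`Σᵢ Pᵢ Xᵢ Pᵢ` is again a contraction, and it pairs with `u` to `Σᵢ ‖Pᵢ u Pᵢ‖₁`.
-/

open scoped MatrixOrder

section StarOrderedRing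

variable {R : Type*} [Ring R] [PartialOrder R] [StarRing R] [StarOrderedRing R]

lemma IsStarProjection.star_conj_mul_conj_le {p x : R} (hp : IsStarProjection p)
    (hx : star x * x ≤ 1) : star (p * x * p) * (p * x * p) ≤ p := by
  have hp' := hp.isSelfAdjoint
  have hpp (a : R) : a * p * p = a * p := by rw [mul_assoc, hp.isIdempotentElem.eq]
  calc star (p * x * p) * (p * x * p) = p * (star x * p * x) * p := by
        simp only [star_mul, hp'.star_eq, ← mul_assoc, hpp]
    _ ≤ p * (star x * 1 * x) * p :=
        hp'.conjugate_le_conjugate (star_left_conjugate_le_conjugate hp.le_one x)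
    _ ≤ p * 1 * p := hp'.conjugate_le_conjugate (by rwa [mul_one])
    _ = p := by rw [mul_one, hp.isIdempotentElem.eq]

lemma CompleteOrthogonalIdempotents.star_sum_conj_mul_sum_conj_le_one {ι : Type*} [Fintype ι]
    {p : ι → R} (hp : CompleteOrthogonalIdempotents p) (hpsa : ∀ i, IsSelfAdjoint (p i))
    {x : ι → R} (hx : ∀ i, star (x i) * x i ≤ 1) :
    star (∑ i, p i * x i * p i) * ∑ i, p i * x i * p i ≤ 1 := by
  have hcross {i j : ι} (hij : j ≠ i) : star (p i * x i * p i) * (p j * x j * p j) = 0 := by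
    simp only [star_mul, (hpsa i).star_eq, mul_assoc]
    rw [← mul_assoc (p i) (p j), hp.ortho hij.symm, zero_mul, mul_zero, mul_zero]
  calc star (∑ i, p i * x i * p i) * ∑ i, p i * x i * p i
      = ∑ i, star (p i * x i * p i) * (p i * x i * p i) := by
        rw [star_sum, Finset.sum_mul_sum]
        exact Finset.sum_congr rfl fun i _ =>
          Finset.sum_eq_single i (fun j _ hji => hcross hji) (by simp)
    _ ≤ ∑ i, p i := Finset.sum_le_sum fun i _ =>
        IsStarProjection.star_conj_mul_conj_le ⟨hp.idem i, hpsa i⟩ (hx i)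
    _ = 1 := hp.complete

end StarOrderedRing

lemma EuclideanSpace.sq_norm_toLp {n : Type*} [Fintype n] (x : n → ℂ) :
    ‖(WithLp.toLp 2 x : EuclideanSpace ℂ n)‖ ^ 2 = (star x ⬝ᵥ x).re := by
  rw [@norm_sq_eq_re_inner ℂ, EuclideanSpace.inner_toLp_toLp, dotProduct_comm]
  rfl

namespace Matrix

variable {n : Type*} [Fintype n]

lemma star_mulVec_dotProduct_mulVec (X : Matrix n n ℂ) (v w : n → ℂ) :
    star (X *ᵥ v) ⬝ᵥ (X *ᵥ w) = star v ⬝ᵥ ((Xᴴ * X) *ᵥ w) := by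
  rw [← mulVec_mulVec, dotProduct_mulVec _ Xᴴ, star_mulVec]

variable [DecidableEq n]

lemma norm_toLp_mulVec_le {X : Matrix n n ℂ} (hX : Xᴴ * X ≤ 1) (w : n → ℂ) :
    ‖(WithLp.toLp 2 (X *ᵥ w) : EuclideanSpace ℂ n)‖ ≤ ‖(WithLp.toLp 2 w : EuclideanSpace ℂ n)‖ := by
  refine (sq_le_sq₀ (norm_nonneg _) (norm_nonneg _)).mp ?_
  have h := (le_iff.mp hX).re_dotProduct_nonneg w
  rw [EuclideanSpace.sq_norm_toLp, EuclideanSpace.sq_norm_toLp, star_mulVec_dotProduct_mulVec]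
  simpa [sub_mulVec, dotProduct_sub] using h

lemma trace_eq_sum_inner (b : OrthonormalBasis n ℂ (EuclideanSpace ℂ n)) (M : Matrix n n ℂ) :
    M.trace = ∑ k, inner ℂ (b k) (WithLp.toLp 2 (M *ᵥ b k)) := by
  simp_rw [← toLpLin_apply, ← LinearMap.trace_eq_sum_inner _ b, toLpLin_eq_toLin,
    LinearMap.trace_eq_matrix_trace ℂ (PiLp.basisFun 2 ℂ n), LinearMap.toMatrix_toLin]

noncomputable def singularValue (A : Matrix n n ℂ) (k : n) : ℝ :=
  √((posSemidef_conjTranspose_mul_self A).1.eigenvalues k)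

noncomputable def rightSingularBasis (A : Matrix n n ℂ) :
    OrthonormalBasis n ℂ (EuclideanSpace ℂ n) :=
  (posSemidef_conjTranspose_mul_self A).1.eigenvectorBasis

lemma norm_toLp_mulVec_rightSingularBasis (A : Matrix n n ℂ) (k : n) :
    ‖(WithLp.toLp 2 (A *ᵥ rightSingularBasis A k) : EuclideanSpace ℂ n)‖ =
      singularValue A k := by
  have hH := (posSemidef_conjTranspose_mul_self A).1
  have hunit : (star ⇑(rightSingularBasis A k) ⬝ᵥ ⇑(rightSingularBasis A k)).re = 1 := by
    rw [← EuclideanSpace.sq_norm_toLp, WithLp.toLp_ofLp, (rightSingularBasis A).orthonormal.1 k,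
      one_pow]
  rw [← Real.sqrt_sq (norm_nonneg _), EuclideanSpace.sq_norm_toLp, star_mulVec_dotProduct_mulVec,
    rightSingularBasis, hH.mulVec_eigenvectorBasis, dotProduct_smul, Complex.real_smul,
    Complex.re_ofReal_mul, ← rightSingularBasis, hunit, mul_one, singularValue]

lemma traceNorm_eq_sum_singularValue (A : Matrix n n ℂ) :
    traceNorm A = ∑ k, singularValue A k := by
  have hU := (posSemidef_conjTranspose_mul_self A).1.eigenvectorUnitary.2
  rw [traceNorm, trace_mul_cycle, mem_unitaryGroup_iff'.mp hU, one_mul]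
  simp [trace_diagonal, singularValue]

lemma traceNorm_nonneg (A : Matrix n n ℂ) : 0 ≤ traceNorm A := by
  rw [traceNorm_eq_sum_singularValue]
  exact Finset.sum_nonneg fun k _ => Real.sqrt_nonneg _

lemma re_trace_mul_le_traceNorm {X : Matrix n n ℂ} (hX : Xᴴ * X ≤ 1) (A : Matrix n n ℂ) :
    (X * A).trace.re ≤ traceNorm A := by
  set b := rightSingularBasis A
  rw [trace_eq_sum_inner b, Complex.re_sum, traceNorm_eq_sum_singularValue]
  refine Finset.sum_le_sum fun k _ => ?_
  calc _ ≤ ‖inner ℂ (b k) (WithLp.toLp 2 ((X * A) *ᵥ b k) : EuclideanSpace ℂ n)‖ :=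
        Complex.re_le_norm _
    _ ≤ ‖b k‖ * ‖(WithLp.toLp 2 (X *ᵥ (A *ᵥ b k)) : EuclideanSpace ℂ n)‖ := by
        rw [← mulVec_mulVec]
        exact norm_inner_le_norm _ _
    _ ≤ 1 * singularValue A k := by
        gcongr
        · exact (b.orthonormal.1 k).le
        · rw [← norm_toLp_mulVec_rightSingularBasis]
          exact norm_toLp_mulVec_le hX _
    _ = singularValue A k := one_mul _

/- The maximiser is `X = M Aᴴ` with `M = |A|⁺` the pseudo-inverse of `|A| = (Aᴴ A)^{1/2}`
(the junk value `0⁻¹ = 0` makes `s⁻¹` below exactly the pseudo-inverse of `s`); `Xᴴ X` is then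
the projection onto the range of `A`, and `X A = |A|`. -/
lemma exists_re_trace_mul_eq_traceNorm (A : Matrix n n ℂ) :
    ∃ X : Matrix n n ℂ, Xᴴ * X ≤ 1 ∧ (X * A).trace.re = traceNorm A := by
  set hH := (posSemidef_conjTranspose_mul_self A).1
  set φ := Unitary.conjStarAlgAut ℂ (Matrix n n ℂ) hH.eigenvectorUnitary
  set D : (n → ℝ) → Matrix n n ℂ := fun f => diagonal fun k => (f k : ℂ)
  set s := singularValue A
  have hD_mul (f g : n → ℝ) : D f * D g = D (f * g) := by simp [D, diagonal_mul_diagonal]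
  have hD_star (f : n → ℝ) : star (D f) = D f := by simp [D, star_eq_conjTranspose]
  have hAA : Aᴴ * A = φ (D (s * s)) := by
    conv_lhs => rw [hH.spectral_theorem]
    congr 2
    ext k
    simp [s, singularValue,
      Real.mul_self_sqrt ((posSemidef_conjTranspose_mul_self A).eigenvalues_nonneg k)]
  set M := φ (D s⁻¹)
  have hM : star M = M := by rw [← map_star, hD_star]
  have hMAAM : M * M * (Aᴴ * A) * (M * M) = M * M := by
    simp only [M, hAA, ← map_mul, hD_mul]
    congr 2
    ext k
    rw [← mul_inv]
    simpa using mul_inv_mul_cancel (s k * s k)⁻¹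
  refine ⟨M * Aᴴ, ?_, ?_⟩
  · have hproj : IsStarProjection (A * (M * M) * Aᴴ) := by
      refine ⟨?_, ?_⟩
      · show _ * _ = _
        calc A * (M * M) * Aᴴ * (A * (M * M) * Aᴴ)
            = A * (M * M * (Aᴴ * A) * (M * M)) * Aᴴ := by simp only [mul_assoc]
          _ = A * (M * M) * Aᴴ := by rw [hMAAM]
      · simp only [IsSelfAdjoint, star_mul, hM, star_eq_conjTranspose,
          conjTranspose_conjTranspose, mul_assoc]
    rw [conjTranspose_mul, conjTranspose_conjTranspose, ← star_eq_conjTranspose, hM]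
    simpa only [mul_assoc] using hproj.le_one
  · have hs : s⁻¹ * (s * s) = s := by
      ext k
      simpa [mul_assoc] using inv_mul_mul_self (s k)
    rw [mul_assoc, hAA, ← map_mul, hD_mul, hs]
    rfl

lemma traceNorm_ofReal_smul_le (A : Matrix n n ℂ) {c : ℝ} (hc : 0 ≤ c) :
    traceNorm ((c : ℂ) • A) ≤ c * traceNorm A := by
  obtain ⟨X, hX, hXA⟩ := exists_re_trace_mul_eq_traceNorm ((c : ℂ) • A)
  rw [← hXA, Matrix.mul_smul, trace_smul, smul_eq_mul, Complex.re_ofReal_mul]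
  exact mul_le_mul_of_nonneg_left (re_trace_mul_le_traceNorm hX A) hc

lemma sum_traceNorm_mul_mul_le {ι : Type*} [Fintype ι] {P : ι → Matrix n n ℂ}
    (hP : CompleteOrthogonalIdempotents P) (hPsa : ∀ i, IsSelfAdjoint (P i)) (A : Matrix n n ℂ) :
    ∑ i, traceNorm (P i * A * P i) ≤ traceNorm A := by
  choose X hX hXA using fun i => exists_re_trace_mul_eq_traceNorm (P i * A * P i)
  calc ∑ i, traceNorm (P i * A * P i)
      = ((∑ i, P i * X i * P i) * A).trace.re := by
        rw [Finset.sum_mul, trace_sum, Complex.re_sum]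
        refine Finset.sum_congr rfl fun i _ => ?_
        rw [← hXA]
        simp only [mul_assoc]
        rw [trace_mul_comm (P i)]
        simp only [mul_assoc]
    _ ≤ traceNorm A :=
        re_trace_mul_le_traceNorm (hP.star_sum_conj_mul_sum_conj_le_one hPsa hX) A

end Matrix

lemma Matrix.eq_sum_single_kronecker {R m n : Type*} [Semiring R] [Fintype m] [DecidableEq m]
    (t : Matrix (m × n) (m × n) R) :
    t = ∑ ab : m × m, single ab.1 ab.2 (1 : R) ⊗ₖ of fun x y => t (ab.1, x) (ab.2, y) := by
  ext ⟨a, x⟩ ⟨b, y⟩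
  simp [Matrix.sum_apply, single_apply, Fintype.sum_prod_type, ite_and]

section Kronecker

variable {R m n ι κ : Type*} [CommSemiring R] [Fintype m] [DecidableEq m] [Fintype n]
  [DecidableEq n] [Fintype ι] [Fintype κ]

lemma CompleteOrthogonalIdempotents.kronecker {P : ι → Matrix m m R} {Q : κ → Matrix n n R}
    (hP : CompleteOrthogonalIdempotents P) (hQ : CompleteOrthogonalIdempotents Q) :
    CompleteOrthogonalIdempotents fun ij : ι × κ => P ij.1 ⊗ₖ Q ij.2 := by
  refine CompleteOrthogonalIdempotents.iff_ortho_complete.mpr ⟨?_, ?_⟩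
  · rintro ⟨i, j⟩ ⟨i', j'⟩ h
    simp only [← mul_kronecker_mul]
    rcases eq_or_ne i i' with rfl | hi
    · rw [hQ.ortho fun hj => h (by rw [hj]), kronecker_zero]
    · rw [hP.ortho hi, zero_kronecker]
  · have : (∑ i, P i) ⊗ₖ (∑ j, Q j) = ∑ ij : ι × κ, P ij.1 ⊗ₖ Q ij.2 := by
      ext
      simp [Matrix.sum_apply, Finset.sum_mul_sum, Fintype.sum_prod_type]
    rw [← this, hP.complete, hQ.complete, one_kronecker_one]

lemma CompleteOrthogonalIdempotents.sum_trace_mul_mul {P : ι → Matrix n n R}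
    (hP : CompleteOrthogonalIdempotents P) (A : Matrix n n R) :
    ∑ i, (P i * A * P i).trace = A.trace := by
  simp_rw [trace_mul_cycle _ A, (hP.idem _).eq, ← trace_sum, ← Finset.sum_mul, hP.complete,
    one_mul]

end Kronecker

section GammaNorm

variable {m n : Type*} [Fintype m] [DecidableEq m] [Fintype n] [DecidableEq n]

def gammaCosts (t : Matrix (m × n) (m × n) ℂ) : Set ℝ :=
  { c | ∃ (r : ℕ) (u : Fin r → Matrix m m ℂ) (v : Fin r → Matrix n n ℂ),
    t = ∑ i, u i ⊗ₖ v i ∧ c = ∑ i, traceNorm (u i) * traceNorm (v i) }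

lemma gammaNorm_eq_sInf_gammaCosts (t : Matrix (m × n) (m × n) ℂ) :
    gammaNorm t = sInf (gammaCosts t) := rfl

lemma sum_mem_gammaCosts {α : Type*} [Fintype α] {t : Matrix (m × n) (m × n) ℂ}
    (u : α → Matrix m m ℂ) (v : α → Matrix n n ℂ) (ht : t = ∑ a, u a ⊗ₖ v a) :
    ∑ a, traceNorm (u a) * traceNorm (v a) ∈ gammaCosts t := by
  let e := (Fintype.equivFin α).symm
  exact ⟨Fintype.card α, u ∘ e, v ∘ e, by rw [ht, ← e.sum_comp]; rfl,
    by rw [← e.sum_comp]; rfl⟩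

lemma gammaCosts_nonempty (t : Matrix (m × n) (m × n) ℂ) : (gammaCosts t).Nonempty :=
  ⟨_, sum_mem_gammaCosts _ _ (eq_sum_single_kronecker t)⟩

lemma nonneg_of_mem_gammaCosts {t : Matrix (m × n) (m × n) ℂ} {c : ℝ} (hc : c ∈ gammaCosts t) :
    0 ≤ c := by
  obtain ⟨r, u, v, -, rfl⟩ := hc
  exact Finset.sum_nonneg fun i _ => mul_nonneg (traceNorm_nonneg _) (traceNorm_nonneg _)

lemma gammaNorm_nonneg (t : Matrix (m × n) (m × n) ℂ) : 0 ≤ gammaNorm t :=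
  le_csInf (gammaCosts_nonempty t) fun _ => nonneg_of_mem_gammaCosts

lemma gammaNorm_le_of_eq_sum {α : Type*} [Fintype α] {t : Matrix (m × n) (m × n) ℂ}
    (u : α → Matrix m m ℂ) (v : α → Matrix n n ℂ) (ht : t = ∑ a, u a ⊗ₖ v a) :
    gammaNorm t ≤ ∑ a, traceNorm (u a) * traceNorm (v a) :=
  csInf_le ⟨0, fun _ => nonneg_of_mem_gammaCosts⟩ (sum_mem_gammaCosts u v ht)

lemma gammaNorm_ofReal_smul_le (t : Matrix (m × n) (m × n) ℂ) {c : ℝ} (hc : 0 ≤ c) :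
    gammaNorm ((c : ℂ) • t) ≤ c * gammaNorm t := by
  rw [← smul_eq_mul, gammaNorm_eq_sInf_gammaCosts t, ← Real.sInf_smul_of_nonneg hc]
  refine le_csInf ((gammaCosts_nonempty t).smul_set) ?_
  rintro _ ⟨_, ⟨r, u, v, ht, rfl⟩, rfl⟩
  calc gammaNorm ((c : ℂ) • t)
      ≤ ∑ i, traceNorm ((c : ℂ) • u i) * traceNorm (v i) :=
        gammaNorm_le_of_eq_sum _ v (by simp [ht, Finset.smul_sum, smul_kronecker])
    _ ≤ ∑ i, c * traceNorm (u i) * traceNorm (v i) := by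
        gcongr with i
        · exact traceNorm_nonneg _
        · exact traceNorm_ofReal_smul_le _ hc
    _ = c • ∑ i, traceNorm (u i) * traceNorm (v i) := by
        simp only [smul_eq_mul, Finset.mul_sum, mul_assoc]

lemma mul_gammaNorm_inv_smul_le (t : Matrix (m × n) (m × n) ℂ) {p : ℝ} (hp : 0 < p) :
    p * gammaNorm ((p : ℂ)⁻¹ • t) ≤ gammaNorm t := by
  rw [← Complex.ofReal_inv]
  calc p * gammaNorm ((p⁻¹ : ℝ) • t) ≤ p * (p⁻¹ * gammaNorm t) :=
        mul_le_mul_of_nonneg_left (gammaNorm_ofReal_smul_le t (inv_nonneg.mpr hp.le)) hp.le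
    _ = gammaNorm t := by field_simp

lemma sum_gammaNorm_kronecker_mul_mul_le {ι κ : Type*} [Fintype ι] [Fintype κ]
    {P : ι → Matrix m m ℂ} {Q : κ → Matrix n n ℂ}
    (hP : CompleteOrthogonalIdempotents P) (hPsa : ∀ i, IsSelfAdjoint (P i))
    (hQ : CompleteOrthogonalIdempotents Q) (hQsa : ∀ j, IsSelfAdjoint (Q j))
    (t : Matrix (m × n) (m × n) ℂ) :
    ∑ ij : ι × κ, gammaNorm ((P ij.1 ⊗ₖ Q ij.2) * t * (P ij.1 ⊗ₖ Q ij.2)) ≤ gammaNorm t := by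
  refine le_csInf (gammaCosts_nonempty t) ?_
  rintro _ ⟨r, u, v, ht, rfl⟩
  calc ∑ ij : ι × κ, gammaNorm ((P ij.1 ⊗ₖ Q ij.2) * t * (P ij.1 ⊗ₖ Q ij.2))
      ≤ ∑ ij : ι × κ, ∑ k, traceNorm (P ij.1 * u k * P ij.1) *
          traceNorm (Q ij.2 * v k * Q ij.2) :=
        Finset.sum_le_sum fun ij _ => gammaNorm_le_of_eq_sum _ _ (by
          simp [ht, Finset.mul_sum, Finset.sum_mul, mul_kronecker_mul])
    _ = ∑ k, (∑ i, traceNorm (P i * u k * P i)) * ∑ j, traceNorm (Q j * v k * Q j) := by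
        rw [Finset.sum_comm]
        simp [Finset.sum_mul_sum, Fintype.sum_prod_type]
    _ ≤ ∑ k, traceNorm (u k) * traceNorm (v k) :=
        Finset.sum_le_sum fun k _ => mul_le_mul (sum_traceNorm_mul_mul_le hP hPsa _)
          (sum_traceNorm_mul_mul_le hQ hQsa _) (Finset.sum_nonneg fun j _ => traceNorm_nonneg _)
          (traceNorm_nonneg _)

end GammaNorm

theorem lueders_average_gammaNorm_le_general {m n ι κ : Type*}
    [Fintype m] [DecidableEq m] [Fintype n] [DecidableEq n] [Fintype ι] [Fintype κ]
    (P : ι → Matrix m m ℂ) (Q : κ → Matrix n n ℂ)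
    (hPherm : ∀ i, (P i)ᴴ = P i)
    (hPorth : ∀ i j, i ≠ j → P i * P j = 0) (hPsum : ∑ i, P i = 1)
    (hQherm : ∀ j, (Q j)ᴴ = Q j)
    (hQorth : ∀ i j, i ≠ j → Q i * Q j = 0) (hQsum : ∑ j, Q j = 1)
    (σ : Matrix (m × n) (m × n) ℂ) (hσ : IsDensity σ) :
    ∑ ij ∈ Finset.univ.filter
        (fun ij : ι × κ =>
          0 < (((P ij.1 ⊗ₖ Q ij.2) * σ * (P ij.1 ⊗ₖ Q ij.2)).trace.re)),
      (((P ij.1 ⊗ₖ Q ij.2) * σ * (P ij.1 ⊗ₖ Q ij.2)).trace.re) *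
        (gammaNorm (((((P ij.1 ⊗ₖ Q ij.2) * σ * (P ij.1 ⊗ₖ Q ij.2)).trace.re : ℂ))⁻¹ •
            ((P ij.1 ⊗ₖ Q ij.2) * σ * (P ij.1 ⊗ₖ Q ij.2))) - 1)
      ≤ gammaNorm σ - 1 := by
  have hP := CompleteOrthogonalIdempotents.iff_ortho_complete.mpr ⟨hPorth, hPsum⟩
  have hQ := CompleteOrthogonalIdempotents.iff_ortho_complete.mpr ⟨hQorth, hQsum⟩
  set ρ := fun ij : ι × κ => (P ij.1 ⊗ₖ Q ij.2) * σ * (P ij.1 ⊗ₖ Q ij.2)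
  set p := fun ij : ι × κ => (ρ ij).trace.re
  have hp_nonneg (ij : ι × κ) : 0 ≤ p ij := by
    have hρ := hσ.1.conjTranspose_mul_mul_same (P ij.1 ⊗ₖ Q ij.2)
    rw [conjTranspose_kronecker, hPherm, hQherm] at hρ
    exact (Complex.nonneg_iff.mp hρ.trace_nonneg).1
  have hp_sum : ∑ ij ∈ Finset.univ.filter (0 < p ·), p ij = 1 := by
    rw [Finset.sum_filter_of_ne fun ij _ h => (hp_nonneg ij).lt_of_ne' h, ← Complex.re_sum,
      (hP.kronecker hQ).sum_trace_mul_mul, hσ.2, Complex.one_re]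
  calc ∑ ij ∈ Finset.univ.filter (0 < p ·), p ij * (gammaNorm ((p ij : ℂ)⁻¹ • ρ ij) - 1)
      = ∑ ij ∈ Finset.univ.filter (0 < p ·), p ij * gammaNorm ((p ij : ℂ)⁻¹ • ρ ij) - 1 := by
        simp only [mul_sub, mul_one, Finset.sum_sub_distrib, hp_sum]
    _ ≤ ∑ ij ∈ Finset.univ.filter (0 < p ·), gammaNorm (ρ ij) - 1 := by
        gcongr with ij hij
        exact mul_gammaNorm_inv_smul_le _ (Finset.mem_filter.mp hij).2
    _ ≤ ∑ ij, gammaNorm (ρ ij) - 1 := sub_le_sub_right (Finset.sum_le_sum_of_subset_of_nonneg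
        (Finset.subset_univ _) fun ij _ _ => gammaNorm_nonneg (ρ ij)) 1
    _ ≤ gammaNorm σ - 1 := by
        gcongr
        exact sum_gammaNorm_kronecker_mul_mul_le hP hPherm hQ hQherm σ

/-- For local Lüders–von Neumann measurements given by complete families of mutually
orthogonal projections {Pᵢ}, {Qⱼ}, the average entanglement `‖·‖_γ - 1` of the
(normalized) outcome states does not exceed that of the input state. -/
theorem lueders_average_gammaNorm_le {m n ι κ : Type*}
    [Fintype m] [DecidableEq m] [Fintype n] [DecidableEq n] [Fintype ι] [Fintype κ]
    (P : ι → Matrix m m ℂ) (Q : κ → Matrix n n ℂ)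
    (hPherm : ∀ i, (P i)ᴴ = P i) (hPidem : ∀ i, P i * P i = P i)
    (hPorth : ∀ i j, i ≠ j → P i * P j = 0) (hPsum : ∑ i, P i = 1)
    (hQherm : ∀ j, (Q j)ᴴ = Q j) (hQidem : ∀ j, Q j * Q j = Q j)
    (hQorth : ∀ i j, i ≠ j → Q i * Q j = 0) (hQsum : ∑ j, Q j = 1)
    (σ : Matrix (m × n) (m × n) ℂ) (hσ : IsDensity σ) :
    ∑ ij ∈ Finset.univ.filter
        (fun ij : ι × κ =>
          0 < (((P ij.1 ⊗ₖ Q ij.2) * σ * (P ij.1 ⊗ₖ Q ij.2)).trace.re)),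
      (((P ij.1 ⊗ₖ Q ij.2) * σ * (P ij.1 ⊗ₖ Q ij.2)).trace.re) *
        (gammaNorm (((((P ij.1 ⊗ₖ Q ij.2) * σ * (P ij.1 ⊗ₖ Q ij.2)).trace.re : ℂ))⁻¹ •
            ((P ij.1 ⊗ₖ Q ij.2) * σ * (P ij.1 ⊗ₖ Q ij.2))) - 1)
      ≤ gammaNorm σ - 1 :=
  lueders_average_gammaNorm_le_general P Q hPherm hPorth hPsum hQherm hQorth hQsum σ hσ
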